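/- Let M and N be representations of the A_3(bf) quiver, each given as a direct sum of interval representations, and let Θ: M → N be a morphism. If π_M: M → I[1,3]^{m} and π_N: N → I[1,3]^{m'} are the canonical projections onto the I[1,3]-isotypic summands and ι_M, ι_N the canonical inclusions, then for a composition Ψ∘Θ of two such morphisms, the restricted block satisfies π_P ∘ (Ψ∘Θ) ∘ ι_M = (π_P ∘ Ψ ∘ ι_N) ∘ (π_N ∘ Θ ∘ ι_M). (Functoriality of the restriction to the I[1,3] diagonal block.) -/

import Mathlib

/-- The ambient space of the direct sum `⊕_{(a,b)} I[a,b]^{m (a,b)}` of interval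
representations: one copy of `K^{m p}` for each pair `p = (a,b)`. -/
abbrev IntSum (K : Type) [Field K] (m : ℕ × ℕ → ℕ) := ∀ p : ℕ × ℕ, Fin (m p) → K

/-- Projection of the ambient space onto the part supported at vertex `v`: it keeps the
component of `I[a,b]` exactly when `[a,b]` is a valid interval of the `A_n` quiver
(`1 ≤ a ≤ b ≤ n`) containing `v`.  The vertex-`v` space of the direct-sum representation
is the image of `trunc`, and for an arrow between vertices `i` and `i+1` the structure
map of the representation is (the restriction of) `trunc (i+1) ∘ trunc i`, keeping exactly
the intervals containing both endpoints. -/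
def trunc (K : Type) [Field K] (n : ℕ) (m : ℕ × ℕ → ℕ) (v : ℕ) :
    IntSum K m →ₗ[K] IntSum K m :=
  LinearMap.pi fun p =>
    if 1 ≤ p.1 ∧ p.1 ≤ v ∧ v ≤ p.2 ∧ p.2 ≤ n then LinearMap.proj p else 0

/-- A morphism of representations of the `A_n` quiver with orientation `τ`
(`τ i = true` meaning the `i`-th arrow points forward `i → i+1`) between the direct sums
of interval representations with multiplicities `m` and `m'`: a family of linear maps
`θ v` (one for each vertex), supported on the vertex spaces, commuting with the structure
maps of the two representations. -/
structure RepMor (K : Type) [Field K] (n : ℕ) (τ : ℕ → Bool) (m m' : ℕ × ℕ → ℕ) where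
  θ : ℕ → IntSum K m →ₗ[K] IntSum K m'
  supp : ∀ v, trunc K n m' v ∘ₗ θ v ∘ₗ trunc K n m v = θ v
  commF : ∀ i, 1 ≤ i → i < n → τ i = true →
    θ (i + 1) ∘ₗ trunc K n m (i + 1) ∘ₗ trunc K n m i =
      trunc K n m' (i + 1) ∘ₗ θ i ∘ₗ trunc K n m i
  commB : ∀ i, 1 ≤ i → i < n → τ i = false →
    θ i ∘ₗ trunc K n m i ∘ₗ trunc K n m (i + 1) =
      trunc K n m' i ∘ₗ θ (i + 1) ∘ₗ trunc K n m (i + 1)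

/-- The diagonal block of a morphism at the interval `I[p.1, p.2]` and vertex `v`:
the composition (projection onto the `I[a,b]`-isotypic summand) ∘ (the morphism) ∘
(inclusion of the `I[a,b]`-isotypic summand). -/
def blk {K : Type} [Field K] {n : ℕ} {τ : ℕ → Bool} {m m' : ℕ × ℕ → ℕ}
    (Θ : RepMor K n τ m m') (p : ℕ × ℕ) (v : ℕ) :
    (Fin (m p) → K) →ₗ[K] (Fin (m' p) → K) :=
  LinearMap.proj p ∘ₗ Θ.θ v ∘ₗ LinearMap.single K (fun p => Fin (m p) → K) p

/-- The orientation `bf` of the `A₃` quiver: arrow 1 backward (`2 → 1`), arrow 2 forward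
(`2 → 3`). -/
def tauBF : ℕ → Bool := fun i => i == 2

/-!
Vertex 2 is the source of the `bf` orientation, so the component of a morphism at a vertex `v`
from a summand `I[a,b]` through 2 to a summand through `v` agrees with its component at 2.
There, commuting with the arrow towards an endpoint missed by `[a,b] ≠ [1,3]` kills the block
`I[a,b] → I[1,3]`, while the block `I[1,3] → I[a,b]` vanishes for `2 ∉ [a,b]`. So in `Ψ ∘ Θ`
restricted to `I[1,3]` at both ends only the factorization through `I[1,3]` survives.
-/

-- Reducible, so that it is literally the (decidable) condition of the `if` in `trunc`.
abbrev ContainsVertex (n : ℕ) (p : ℕ × ℕ) (v : ℕ) : Prop :=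
  1 ≤ p.1 ∧ p.1 ≤ v ∧ v ≤ p.2 ∧ p.2 ≤ n

theorem ContainsVertex.full {n : ℕ} {p : ℕ × ℕ} {v : ℕ} (h : ContainsVertex n p v) :
    ContainsVertex n (1, n) v :=
  ⟨le_rfl, h.1.trans h.2.1, h.2.2.1.trans h.2.2.2, le_rfl⟩

theorem Pi.eq_sum_single_of_forall_notMem {ι : Type*} {β : ι → Type*} [DecidableEq ι]
    [∀ i, AddCommMonoid (β i)] (z : ∀ i, β i) (s : Finset ι) (h : ∀ i ∉ s, z i = 0) :
    z = ∑ i ∈ s, Pi.single i (z i) := by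
  funext i
  rw [Finset.sum_apply, Finset.sum_pi_single]
  split_ifs with hi
  · rfl
  · exact h i hi

section Trunc

variable {K : Type} [Field K] {n : ℕ} {m : ℕ × ℕ → ℕ} {v : ℕ} {p : ℕ × ℕ}

theorem trunc_apply_of_containsVertex (hp : ContainsVertex n p v) (z : IntSum K m) :
    trunc K n m v z p = z p := by
  rw [trunc, LinearMap.pi_apply, if_pos hp, LinearMap.proj_apply]

theorem trunc_apply_of_not_containsVertex (hp : ¬ ContainsVertex n p v) (z : IntSum K m) :
    trunc K n m v z p = 0 := by
  rw [trunc, LinearMap.pi_apply, if_neg hp, LinearMap.zero_apply]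

theorem trunc_single_of_containsVertex (hp : ContainsVertex n p v) (x : Fin (m p) → K) :
    trunc K n m v (Pi.single p x) = Pi.single p x := by
  funext q
  by_cases hq : ContainsVertex n q v
  · rw [trunc_apply_of_containsVertex hq]
  · rw [trunc_apply_of_not_containsVertex hq, Pi.single_eq_of_ne (by rintro rfl; exact hq hp)]

theorem trunc_single_of_not_containsVertex (hp : ¬ ContainsVertex n p v) (x : Fin (m p) → K) :
    trunc K n m v (Pi.single p x) = 0 := by
  funext q
  by_cases hq : ContainsVertex n q v
  · rw [trunc_apply_of_containsVertex hq, Pi.single_eq_of_ne (by rintro rfl; exact hp hq),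
      Pi.zero_apply]
  · rw [trunc_apply_of_not_containsVertex hq, Pi.zero_apply]

end Trunc

namespace RepMor

variable {K : Type} [Field K]

section General

variable {n : ℕ} {τ : ℕ → Bool} {m m' : ℕ × ℕ → ℕ} (Θ : RepMor K n τ m m')

theorem apply_eq_zero_of_not_containsVertex {v : ℕ} {p : ℕ × ℕ}
    (hp : ¬ ContainsVertex n p v) (z : IntSum K m) : Θ.θ v z p = 0 := by
  rw [← Θ.supp v, LinearMap.comp_apply, trunc_apply_of_not_containsVertex hp]

theorem apply_single_eq_zero_of_not_containsVertex {v : ℕ} {q : ℕ × ℕ}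
    (hq : ¬ ContainsVertex n q v) (x : Fin (m q) → K) : Θ.θ v (Pi.single q x) = 0 := by
  rw [← Θ.supp v, LinearMap.comp_apply, LinearMap.comp_apply,
    trunc_single_of_not_containsVertex hq, map_zero, map_zero]

variable {u w : ℕ}

-- `hcomm` is the square `Θ.commF` or `Θ.commB` of an arrow `u → w`.
theorem apply_trunc_trunc_of_comm
    (hcomm : Θ.θ w ∘ₗ trunc K n m w ∘ₗ trunc K n m u = trunc K n m' w ∘ₗ Θ.θ u ∘ₗ trunc K n m u)
    {p : ℕ × ℕ} (hp : ContainsVertex n p w) (z : IntSum K m) :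
    Θ.θ w (trunc K n m w (trunc K n m u z)) p = Θ.θ u (trunc K n m u z) p := by
  have := congrFun (LinearMap.congr_fun hcomm z) p
  rwa [LinearMap.comp_apply, LinearMap.comp_apply, LinearMap.comp_apply, LinearMap.comp_apply,
    trunc_apply_of_containsVertex hp] at this

theorem apply_single_eq_of_comm
    (hcomm : Θ.θ w ∘ₗ trunc K n m w ∘ₗ trunc K n m u = trunc K n m' w ∘ₗ Θ.θ u ∘ₗ trunc K n m u)
    {q : ℕ × ℕ} (hqu : ContainsVertex n q u) (hqw : ContainsVertex n q w)
    {p : ℕ × ℕ} (hp : ContainsVertex n p w) (x : Fin (m q) → K) :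
    Θ.θ w (Pi.single q x) p = Θ.θ u (Pi.single q x) p := by
  simpa only [trunc_single_of_containsVertex hqu, trunc_single_of_containsVertex hqw] using
    Θ.apply_trunc_trunc_of_comm hcomm hp (Pi.single q x)

theorem apply_single_eq_zero_of_comm
    (hcomm : Θ.θ w ∘ₗ trunc K n m w ∘ₗ trunc K n m u = trunc K n m' w ∘ₗ Θ.θ u ∘ₗ trunc K n m u)
    {q : ℕ × ℕ} (hqu : ContainsVertex n q u) (hqw : ¬ ContainsVertex n q w)
    {p : ℕ × ℕ} (hp : ContainsVertex n p w) (x : Fin (m q) → K) :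
    Θ.θ u (Pi.single q x) p = 0 := by
  simpa only [trunc_single_of_containsVertex hqu, trunc_single_of_not_containsVertex hqw,
    map_zero, Pi.zero_apply, eq_comm] using Θ.apply_trunc_trunc_of_comm hcomm hp (Pi.single q x)

end General

section TauBF

variable {m₁ m₂ : ℕ × ℕ → ℕ} (Θ : RepMor K 3 tauBF m₁ m₂)

theorem tauBF_apply_single_eq {q : ℕ × ℕ} (hq : ContainsVertex 3 q 2) {v : ℕ}
    (hqv : ContainsVertex 3 q v) {p : ℕ × ℕ} (hp : ContainsVertex 3 p v) (x : Fin (m₁ q) → K) :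
    Θ.θ v (Pi.single q x) p = Θ.θ 2 (Pi.single q x) p := by
  obtain rfl | rfl | rfl : v = 1 ∨ v = 2 ∨ v = 3 := by
    obtain ⟨-, -, -, -⟩ := hqv
    omega
  · exact Θ.apply_single_eq_of_comm (Θ.commB 1 le_rfl (by norm_num) rfl) hq hqv hp x
  · rfl
  · exact Θ.apply_single_eq_of_comm (Θ.commF 2 (by norm_num) (by norm_num) rfl) hq hqv hp x

theorem tauBF_apply_single_apply_13_eq_zero {q : ℕ × ℕ} (hq : ContainsVertex 3 q 2)
    (hq13 : q ≠ (1, 3)) (v : ℕ) (x : Fin (m₁ q) → K) :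
    Θ.θ v (Pi.single q x) (1, 3) = 0 := by
  by_cases hqv : ContainsVertex 3 q v
  · rw [Θ.tauBF_apply_single_eq hq hqv hqv.full]
    obtain h1 | h3 : ¬ ContainsVertex 3 q 1 ∨ ¬ ContainsVertex 3 q 3 := by
      obtain ⟨a, b⟩ := q
      simp only [ContainsVertex, ne_eq, Prod.mk.injEq] at hq hq13 ⊢
      omega
    · exact Θ.apply_single_eq_zero_of_comm (Θ.commB 1 le_rfl (by norm_num) rfl) hq h1
        (by decide) x
    · exact Θ.apply_single_eq_zero_of_comm (Θ.commF 2 (by norm_num) (by norm_num) rfl) hq h3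
        (by decide) x
  · rw [Θ.apply_single_eq_zero_of_not_containsVertex hqv, Pi.zero_apply]

theorem tauBF_apply_single_13_apply_eq_zero {q : ℕ × ℕ} (hq : ¬ ContainsVertex 3 q 2) (v : ℕ)
    (x : Fin (m₁ (1, 3)) → K) :
    Θ.θ v (Pi.single (1, 3) x) q = 0 := by
  by_cases hqv : ContainsVertex 3 q v
  · rw [Θ.tauBF_apply_single_eq (by decide) hqv.full hqv x]
    exact Θ.apply_eq_zero_of_not_containsVertex hq _
  · exact Θ.apply_eq_zero_of_not_containsVertex hqv _

end TauBF

end RepMor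

theorem blk13_comp (K : Type) [Field K] (m₁ m₂ m₃ : ℕ × ℕ → ℕ)
    (Θ : RepMor K 3 tauBF m₁ m₂) (Ψ : RepMor K 3 tauBF m₂ m₃)
    (v : ℕ) :
    LinearMap.proj (1, 3) ∘ₗ (Ψ.θ v ∘ₗ Θ.θ v) ∘ₗ
        LinearMap.single K (fun p => Fin (m₁ p) → K) (1, 3) =
      blk Ψ (1, 3) v ∘ₗ blk Θ (1, 3) v := by
  refine LinearMap.ext fun x => ?_
  set y := Θ.θ v (Pi.single (1, 3) x)
  set T : Finset (ℕ × ℕ) := Finset.Icc 1 2 ×ˢ Finset.Icc 2 3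
  have mem_T : ∀ q, q ∈ T ↔ ContainsVertex 3 q 2 := by
    rintro ⟨a, b⟩
    simp only [T, ContainsVertex, Finset.mem_product, Finset.mem_Icc]
    omega
  have hy : y = ∑ q ∈ T, Pi.single q (y q) :=
    Pi.eq_sum_single_of_forall_notMem y T fun q hq =>
      Θ.tauBF_apply_single_13_apply_eq_zero ((mem_T q).not.mp hq) v x
  calc Ψ.θ v y (1, 3) = ∑ q ∈ T, Ψ.θ v (Pi.single q (y q)) (1, 3) := by
        conv_lhs => rw [hy]
        rw [map_sum, Finset.sum_apply]
    _ = Ψ.θ v (Pi.single (1, 3) (y (1, 3))) (1, 3) :=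
        Finset.sum_eq_single_of_mem _ ((mem_T _).mpr (by decide)) fun q hq hq13 =>
          Ψ.tauBF_apply_single_apply_13_eq_zero ((mem_T q).mp hq) hq13 v _
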